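/- If the multiplication matrices A_1, ..., A_n commute and some A_i has #I distinct eigenvalues, then the solutions of the system x^α = Σ_{β∈I} a_{α,β} x^β (α ∈ J) are determined by the eigenvalues of A_i alone: the system has exactly #I distinct solutions, their i-th coordinates are precisely the eigenvalues of A_i, and each solution is recovered from the corresponding (unique up to scale) eigenvector of A_i. -/

import Mathlib

open Finset Matrix

/-- Total degree of a multi-index. -/
def mdeg {n : ℕ} (α : Fin n → ℕ) : ℕ := ∑ i, α i

/-- The set `I = {α ∈ ℤ₊ⁿ : |α| ≤ m}` of multi-indices of total degree at most `m`. -/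
def Idx (n m : ℕ) : Finset (Fin n → ℕ) :=
  (Fintype.piFinset fun _ => Finset.range (m + 1)).filter fun α => mdeg α ≤ m

/-- `I` is a lower set of multi-indices. -/
def IsLower {n : ℕ} (I : Finset (Fin n → ℕ)) : Prop :=
  ∀ β ∈ I, ∀ γ : Fin n → ℕ, (∀ i, γ i ≤ β i) → γ ∈ I

/-- `α` belongs to the border `J` of the lower set `I`. -/
def InBorder {n : ℕ} (I : Finset (Fin n → ℕ)) (α : Fin n → ℕ) : Prop :=
  α ∉ I ∧ ∃ β ∈ I, ∃ i : Fin n, α = β + Pi.single i 1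

/-- The multiplication matrix `A_i`: its row indexed by `β ∈ I` is the standard basis
vector at `β + e_i` if `β + e_i ∈ I`, and is `(a_{β+e_i,γ})_{γ∈I}` otherwise. -/
def multMat {K : Type*} [Field K] {n : ℕ} (I : Finset (Fin n → ℕ))
    (a : (Fin n → ℕ) → (Fin n → ℕ) → K) (i : Fin n) : Matrix ↥I ↥I K :=
  fun β γ =>
    if (β : Fin n → ℕ) + Pi.single i 1 ∈ I then
      (if (γ : Fin n → ℕ) = (β : Fin n → ℕ) + Pi.single i 1 then 1 else 0)
    else a ((β : Fin n → ℕ) + Pi.single i 1) γ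

/-- The monomial vector `v(x) = (x^β)_{β ∈ I}`. -/
def monVec {K : Type*} [Field K] {n : ℕ} (I : Finset (Fin n → ℕ)) (x : Fin n → K) :
    ↥I → K :=
  fun β => ∏ i, x i ^ (β : Fin n → ℕ) i

/-- `x` is a solution of the system (1): `x^α = Σ_{β∈I} a_{α,β} x^β` for all `|α| = m+1`. -/
def IsSol {K : Type*} [Field K] {n : ℕ} (m : ℕ)
    (a : (Fin n → ℕ) → (Fin n → ℕ) → K) (x : Fin n → K) : Prop :=
  ∀ α : Fin n → ℕ, mdeg α = m + 1 →
    ∏ i, x i ^ α i = ∑ β ∈ Idx n m, a α β * ∏ i, x i ^ β i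

/-- `x` is a solution of the system for a general lower set `I` with border `J`. -/
def IsSolB {K : Type*} [Field K] {n : ℕ} (I : Finset (Fin n → ℕ))
    (a : (Fin n → ℕ) → (Fin n → ℕ) → K) (x : Fin n → K) : Prop :=
  ∀ α : Fin n → ℕ, InBorder I α →
    ∏ i, x i ^ α i = ∑ β ∈ I, a α β * ∏ i, x i ^ β i

/-- A square matrix is diagonalizable (semisimple). -/
def Diagonalizable {K : Type*} [Field K] {ι : Type*} [Fintype ι] [DecidableEq ι]
    (A : Matrix ι ι K) : Prop :=
  ∃ P : Matrix ι ι K, IsUnit P.det ∧ (P⁻¹ * A * P).IsDiag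

/-- The polynomial `P_α = x^α − Σ_{β∈I} a_{α,β} x^β`. -/
noncomputable def Pb {K : Type*} [Field K] {n : ℕ} (I : Finset (Fin n → ℕ))
    (a : (Fin n → ℕ) → (Fin n → ℕ) → K) (α : Fin n → ℕ) : MvPolynomial (Fin n) K :=
  MvPolynomial.monomial (Finsupp.equivFunOnFinite.symm α) 1 -
    ∑ β ∈ I, MvPolynomial.C (a α β) * MvPolynomial.monomial (Finsupp.equivFunOnFinite.symm β) 1

/-- The ideal generated by the polynomials `P_α`, `α ∈ J`. -/
noncomputable def PIdeal {K : Type*} [Field K] {n : ℕ} (I : Finset (Fin n → ℕ))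
    (a : (Fin n → ℕ) → (Fin n → ℕ) → K) : Ideal (MvPolynomial (Fin n) K) :=
  Ideal.span {p | ∃ α : Fin n → ℕ, InBorder I α ∧ p = Pb I a α}

/-!
The `#I` eigenvalues of `A_{i₀}` being distinct, its eigenvectors `v_j` form a basis and each
eigenspace is a line. As every `A_i` commutes with `A_{i₀}`, each `v_j` is a common eigenvector,
`A_i v_j = x_{j,i} v_j`. Read row by row, the rows `β` with `β + e_i ∈ I` force `v_j` to be a
multiple of the monomial vector `(x_j^β)_{β ∈ I}`, and the remaining rows are exactly the
equations of the system at `x_j`. Conversely a solution `y` makes `(y^β)_{β ∈ I}` a common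
eigenvector, hence a multiple of some `v_j`, and then `y = x_j`.
-/

universe u v

namespace Matrix

variable {K : Type u} {ι : Type v} [Field K] [Fintype ι] [DecidableEq ι] {M : Matrix ι ι K}
  {μ : ι → K} {v : ι → ι → K}

theorem exists_eq_smul_of_mulVec_eq_smul (hμ : Function.Injective μ) (hv0 : ∀ j, v j ≠ 0)
    (hv : ∀ j, M *ᵥ v j = μ j • v j) {w : ι → K} {t : K} (hw0 : w ≠ 0)
    (hw : M *ᵥ w = t • w) : ∃ k, t = μ k ∧ ∃ c : K, w = c • v k := by
  classical
  have hli : LinearIndependent K v :=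
    Module.End.eigenvectors_linearIndependent' M.mulVecLin μ hμ v fun j =>
      Module.End.hasEigenvector_iff.mpr ⟨Module.End.mem_eigenspace_iff.mpr (hv j), hv0 j⟩
  let b := basisOfPiSpaceOfLinearIndependent hli
  have hb : ⇑b = v := coe_basisOfPiSpaceOfLinearIndependent hli
  set c := b.repr w
  have hcoord : ∀ l, μ l * c l = t * c l := by
    have hMw : M *ᵥ w = ∑ l, (μ l * c l) • v l := by
      conv_lhs => rw [← b.sum_repr w, hb]
      rw [← M.mulVecLin_apply, map_sum]
      refine sum_congr rfl fun l _ => ?_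
      rw [map_smul, M.mulVecLin_apply, hv, smul_smul, mul_comm]
    intro l
    have := congrArg (fun u => b.repr u l) hMw
    simp only [hw, map_smul, ← hb, b.repr_sum_self] at this
    simpa [c, mul_comm] using this.symm
  obtain ⟨k, hk⟩ : ∃ k, c k ≠ 0 := by
    by_contra! h
    exact hw0 (b.repr.injective (by ext l; simp [c, h l]))
  have ht : t = μ k := (mul_right_cancel₀ hk (hcoord k)).symm
  refine ⟨k, ht, c k, b.repr.injective ?_⟩
  ext l
  rw [← hb, map_smul, b.repr_self, Finsupp.smul_apply, Finsupp.single_apply]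
  split_ifs with hkl
  · subst hkl; simp [c]
  · have hl : μ l ≠ t := fun h => hkl (hμ (ht ▸ h)).symm
    simpa using (mul_eq_mul_right_iff.mp (hcoord l)).resolve_left hl

theorem exists_eq_smul_of_mulVec_eq_eigenvalue_smul (hμ : Function.Injective μ)
    (hv0 : ∀ j, v j ≠ 0) (hv : ∀ j, M *ᵥ v j = μ j • v j) {j : ι} {w : ι → K}
    (hw : M *ᵥ w = μ j • w) : ∃ c : K, w = c • v j := by
  rcases eq_or_ne w 0 with rfl | hw0
  · exact ⟨0, (zero_smul K _).symm⟩
  obtain ⟨k, hjk, c, rfl⟩ := exists_eq_smul_of_mulVec_eq_smul hμ hv0 hv hw0 hw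
  exact ⟨c, by rw [hμ hjk]⟩

end Matrix

section MultiIndex

variable {n m : ℕ}

theorem mdeg_add (β γ : Fin n → ℕ) : mdeg (β + γ) = mdeg β + mdeg γ := by
  simp [mdeg, sum_add_distrib]

theorem mdeg_single (i : Fin n) : mdeg (Pi.single i 1 : Fin n → ℕ) = 1 := by
  simp [mdeg]

theorem mem_Idx {β : Fin n → ℕ} : β ∈ Idx n m ↔ mdeg β ≤ m := by
  refine ⟨fun h => (mem_filter.mp h).2, fun h => mem_filter.mpr ⟨?_, h⟩⟩
  refine Fintype.mem_piFinset.mpr fun i => mem_range.mpr ?_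
  have : β i ≤ mdeg β := single_le_sum (fun j _ => Nat.zero_le (β j)) (mem_univ i)
  omega

theorem zero_mem_Idx : (0 : Fin n → ℕ) ∈ Idx n m := mem_Idx.mpr (by simp [mdeg])

theorem isLower_Idx : IsLower (Idx n m) := fun _ hβ _ hγ =>
  mem_Idx.mpr ((sum_le_sum fun i _ => hγ i).trans (mem_Idx.mp hβ))

theorem exists_eq_add_single {β : Fin n → ℕ} (hβ : β ≠ 0) :
    ∃ (γ : Fin n → ℕ) (i : Fin n), β = γ + Pi.single i 1 := by
  obtain ⟨i, hi⟩ := Function.ne_iff.mp hβ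
  refine ⟨β - Pi.single i 1, i, funext fun k => ?_⟩
  rcases eq_or_ne k i with rfl | hk
  · simp only [Pi.add_apply, Pi.sub_apply, Pi.single_eq_same]
    simp only [Pi.zero_apply] at hi
    omega
  · simp [Pi.single_eq_of_ne hk]

theorem inBorder_Idx_iff {α : Fin n → ℕ} : InBorder (Idx n m) α ↔ mdeg α = m + 1 := by
  simp only [InBorder, mem_Idx, not_le]
  constructor
  · rintro ⟨hα, β, hβ, i, rfl⟩
    rw [mdeg_add, mdeg_single] at hα ⊢
    omega
  · intro hα
    obtain ⟨β, i, rfl⟩ := exists_eq_add_single (β := α) (by rintro rfl; simp [mdeg] at hα)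
    rw [mdeg_add, mdeg_single] at hα ⊢
    exact ⟨by omega, β, by omega, i, rfl⟩

theorem isSol_iff_isSolB {K : Type u} [Field K] (a : (Fin n → ℕ) → (Fin n → ℕ) → K)
    (x : Fin n → K) : IsSol m a x ↔ IsSolB (Idx n m) a x := by
  simp only [IsSol, IsSolB, inBorder_Idx_iff]

end MultiIndex

section MultiplicationMatrix

variable {K : Type u} [Field K] {n : ℕ} {I : Finset (Fin n → ℕ)}
  (a : (Fin n → ℕ) → (Fin n → ℕ) → K)

theorem prod_pow_add_single (x : Fin n → K) (β : Fin n → ℕ) (i : Fin n) :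
    ∏ k, x k ^ (β + Pi.single i 1 : Fin n → ℕ) k = x i * ∏ k, x k ^ β k := by
  simp only [Pi.add_apply, pow_add, prod_mul_distrib]
  simp [Pi.single_apply, mul_comm]

theorem monVec_add_single (x : Fin n → K) {β : Fin n → ℕ} (hβ : β ∈ I) {i : Fin n}
    (h : β + Pi.single i 1 ∈ I) :
    monVec I x ⟨β + Pi.single i 1, h⟩ = x i * monVec I x ⟨β, hβ⟩ :=
  prod_pow_add_single x β i

theorem monVec_zero (h0 : 0 ∈ I) (x : Fin n → K) : monVec I x ⟨0, h0⟩ = 1 := by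
  simp [monVec]

theorem monVec_ne_zero (h0 : 0 ∈ I) (x : Fin n → K) : monVec I x ≠ 0 := fun h => by
  simpa [monVec_zero] using congrFun h ⟨0, h0⟩

theorem multMat_mulVec_of_mem {i : Fin n} (w : ↥I → K) {β : ↥I}
    (h : (β : Fin n → ℕ) + Pi.single i 1 ∈ I) :
    (multMat I a i *ᵥ w) β = w ⟨(β : Fin n → ℕ) + Pi.single i 1, h⟩ := by
  simp [mulVec, dotProduct, multMat, h, ← Subtype.ext_iff (a2 := (⟨_, h⟩ : I))]

theorem multMat_mulVec_of_not_mem {i : Fin n} (w : ↥I → K) {β : ↥I}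
    (h : (β : Fin n → ℕ) + Pi.single i 1 ∉ I) :
    (multMat I a i *ᵥ w) β = ∑ γ : ↥I, a ((β : Fin n → ℕ) + Pi.single i 1) γ * w γ := by
  simp only [mulVec, dotProduct, multMat, if_neg h]

theorem isSolB_iff_forall_mulVec_monVec (x : Fin n → K) :
    IsSolB I a x ↔ ∀ i, multMat I a i *ᵥ monVec I x = x i • monVec I x := by
  constructor
  · intro hx i
    funext β
    rw [Pi.smul_apply, smul_eq_mul]
    by_cases hβ : (β : Fin n → ℕ) + Pi.single i 1 ∈ I
    · rw [multMat_mulVec_of_mem a _ hβ, monVec_add_single x β.2]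
    · rw [multMat_mulVec_of_not_mem a _ hβ]
      change _ = x i * ∏ k, x k ^ (β : Fin n → ℕ) k
      rw [← prod_pow_add_single, hx _ ⟨hβ, β, β.2, i, rfl⟩]
      exact sum_coe_sort I fun γ => a _ γ * ∏ k, x k ^ γ k
  · rintro hx α ⟨hα, β, hβ, i, rfl⟩
    have := congrFun (hx i) ⟨β, hβ⟩
    rw [multMat_mulVec_of_not_mem a _ hα] at this
    rw [prod_pow_add_single, ← sum_coe_sort I]
    exact this.symm

theorem eq_smul_monVec_of_forall_mulVec_eq_smul (hI : IsLower I) (h0 : 0 ∈ I) {w : ↥I → K}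
    {x : Fin n → K} (hw : ∀ i, multMat I a i *ᵥ w = x i • w) :
    w = w ⟨0, h0⟩ • monVec I x := by
  suffices H : ∀ d (β : Fin n → ℕ) (hβ : β ∈ I), mdeg β = d →
      w ⟨β, hβ⟩ = w ⟨0, h0⟩ * monVec I x ⟨β, hβ⟩ from
    funext fun β => H _ β β.2 rfl
  intro d
  induction d with
  | zero =>
    intro β hβ hd
    obtain rfl : β = 0 := funext (by simpa [mdeg] using hd)
    simp [monVec]
  | succ d ih =>
    intro β hβ hd
    obtain ⟨γ, i, rfl⟩ := exists_eq_add_single (β := β) (by rintro rfl; simp [mdeg] at hd)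
    have hγ : γ ∈ I := hI _ hβ γ fun k => Nat.le_add_right _ _
    rw [mdeg_add, mdeg_single] at hd
    have := congrFun (hw i) ⟨γ, hγ⟩
    rw [multMat_mulVec_of_mem a _ hβ, Pi.smul_apply, smul_eq_mul, ih γ hγ (by omega)] at this
    rw [this, monVec_add_single x hγ]
    ring

theorem isSolB_of_forall_mulVec_eq_smul (hI : IsLower I) (h0 : 0 ∈ I) {w : ↥I → K}
    {x : Fin n → K} (hw0 : w ≠ 0) (hw : ∀ i, multMat I a i *ᵥ w = x i • w) : IsSolB I a x := by
  have hmon := eq_smul_monVec_of_forall_mulVec_eq_smul a hI h0 hw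
  have hc : w ⟨0, h0⟩ ≠ 0 := fun h => hw0 (by rw [hmon, h, zero_smul])
  refine (isSolB_iff_forall_mulVec_monVec a x).2 fun i => smul_right_injective _ hc ?_
  dsimp only
  rw [← mulVec_smul, ← hmon, hw, smul_comm]
  conv_lhs => rw [hmon]

theorem eq_of_monVec_eq (h0 : 0 ∈ I) {x y : Fin n → K} (hx : IsSolB I a x) (hy : IsSolB I a y)
    (h : monVec I x = monVec I y) : x = y := by
  rw [isSolB_iff_forall_mulVec_monVec] at hx hy
  funext i
  refine smul_left_injective K (monVec_ne_zero h0 x) ?_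
  dsimp only
  rw [← hx i, h, hy i]

end MultiplicationMatrix

theorem stmt_12_general {K : Type*} [Field K] {n m : ℕ}
    (a : (Fin n → ℕ) → (Fin n → ℕ) → K)
    (hcomm : ∀ i j, multMat (Idx n m) a i * multMat (Idx n m) a j
        = multMat (Idx n m) a j * multMat (Idx n m) a i)
    (i₀ : Fin n) (μ : ↥(Idx n m) → K) (hμ : Function.Injective μ)
    (heig : ∀ j, ∃ v : ↥(Idx n m) → K, v ≠ 0 ∧ multMat (Idx n m) a i₀ *ᵥ v = μ j • v) :
    ∃ x : ↥(Idx n m) → (Fin n → K),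
      Function.Injective x ∧ (∀ j, IsSol m a (x j)) ∧
      (∀ y : Fin n → K, IsSol m a y → ∃ j, y = x j) ∧
      (∀ j, x j i₀ = μ j) ∧
      ∀ (j : ↥(Idx n m)) (v : ↥(Idx n m) → K), v ≠ 0 →
        multMat (Idx n m) a i₀ *ᵥ v = μ j • v →
        ∃ c : K, c ≠ 0 ∧ v = c • monVec (Idx n m) (x j) := by
  have h0 : (0 : Fin n → ℕ) ∈ Idx n m := zero_mem_Idx
  choose v hv0 hv using heig
  have hline j w := exists_eq_smul_of_mulVec_eq_eigenvalue_smul hμ hv0 hv (j := j) (w := w)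
  have hjoint : ∀ j i, ∃ t, multMat (Idx n m) a i *ᵥ v j = t • v j := fun j i =>
    hline j _ (by rw [mulVec_mulVec, hcomm, ← mulVec_mulVec, hv, mulVec_smul])
  choose x hx using hjoint
  have hvmon j : v j = v j ⟨0, h0⟩ • monVec _ (x j) :=
    eq_smul_monVec_of_forall_mulVec_eq_smul a isLower_Idx h0 (hx j)
  have hsol j : IsSolB (Idx n m) a (x j) :=
    isSolB_of_forall_mulVec_eq_smul a isLower_Idx h0 (hv0 j) (hx j)
  have hxμ j : x j i₀ = μ j := smul_left_injective K (hv0 j) ((hx j i₀).symm.trans (hv j))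
  refine ⟨x, fun j k h => hμ (by rw [← hxμ, ← hxμ, h]), fun j => (isSol_iff_isSolB a _).2 (hsol j),
    ?_, hxμ, ?_⟩
  · intro y hy
    rw [isSol_iff_isSolB] at hy
    obtain ⟨k, -, c, hc⟩ := exists_eq_smul_of_mulVec_eq_smul hμ hv0 hv (monVec_ne_zero h0 y)
      ((isSolB_iff_forall_mulVec_monVec a y).1 hy i₀)
    rw [hvmon k, smul_smul] at hc
    have hc1 : c * v k ⟨0, h0⟩ = 1 := by simpa [monVec_zero] using (congrFun hc ⟨0, h0⟩).symm
    exact ⟨k, eq_of_monVec_eq a h0 hy (hsol k) (by rw [hc, hc1, one_smul])⟩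
  · intro j w hw0 hw
    obtain ⟨c, rfl⟩ := hline j w hw
    have hv00 : v j ⟨0, h0⟩ ≠ 0 := fun h => hv0 j (by rw [hvmon j, h, zero_smul])
    refine ⟨c * v j ⟨0, h0⟩, mul_ne_zero (left_ne_zero_of_smul hw0) hv00, ?_⟩
    conv_lhs => rw [hvmon j]
    rw [smul_smul]

/-- If the multiplication matrices commute and some `A_{i₀}` has `#I` distinct
eigenvalues, then the system has exactly `#I` distinct solutions, their `i₀`-th
coordinates are the eigenvalues of `A_{i₀}`, and each solution is recovered from the
corresponding (unique up to scale) eigenvector of `A_{i₀}`. -/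
theorem stmt_12 {K : Type*} [Field K] [IsAlgClosed K] {n m : ℕ}
    (a : (Fin n → ℕ) → (Fin n → ℕ) → K)
    (hcomm : ∀ i j, multMat (Idx n m) a i * multMat (Idx n m) a j
        = multMat (Idx n m) a j * multMat (Idx n m) a i)
    (i₀ : Fin n) (μ : ↥(Idx n m) → K) (hμ : Function.Injective μ)
    (heig : ∀ j, ∃ v : ↥(Idx n m) → K, v ≠ 0 ∧ multMat (Idx n m) a i₀ *ᵥ v = μ j • v) :
    ∃ x : ↥(Idx n m) → (Fin n → K),
      Function.Injective x ∧ (∀ j, IsSol m a (x j)) ∧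
      (∀ y : Fin n → K, IsSol m a y → ∃ j, y = x j) ∧
      (∀ j, x j i₀ = μ j) ∧
      ∀ (j : ↥(Idx n m)) (v : ↥(Idx n m) → K), v ≠ 0 →
        multMat (Idx n m) a i₀ *ᵥ v = μ j • v →
        ∃ c : K, c ≠ 0 ∧ v = c • monVec (Idx n m) (x j) :=
  stmt_12_general a hcomm i₀ μ hμ heig
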